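/- Let $F/F_0$ be an unramified quadratic extension of non-archimedean local fields and $(V, f)$ a 2-dimensional nondegenerate hermitian space. Let $\Lambda$ be a strict self-dual $\mathfrak{o}_F$-lattice sequence in $V$ with $e(\Lambda) = 2$ and duality index $d(\Lambda)$ (so $\Lambda(i)^\# = \Lambda(d(\Lambda)-i)$). Then $(V, f)$ is anisotropic if and only if $d(\Lambda)$ is odd. -/

import Mathlib

/-!
Write `N s = σ s * s`. For an `F`-basis `(p, q)` of `V` with Gram determinant `Δ`, completing the
square shows that `V` is isotropic iff `-Δ` is a norm. As `F/F₀` is unramified, a norm has even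
valuation, and conversely every unit of `R` fixed by `σ` is a norm (solve the norm equation in the
finite residue field, then lift it by Hensel's lemma).

If `d = 2m`, then `Λ(m)` is self-dual, so the Gram determinant of an `R`-basis of `Λ(m)` is a unit
fixed by `σ`, and `V` is isotropic. If `d = 2m + 1`, then `Λ(m + 1) = Λ(m)^#` lies strictly
between `ϖ Λ(m)` and `Λ(m)`, so `Λ(m)` has an `R`-basis `(p, q)` for which `(p, ϖ q)` is an
`R`-basis of `Λ(m + 1)`. Duality makes the pairing matrix between these bases invertible over `R`,
so `ϖ Δ` is a unit: `Δ` has odd valuation and `V` is anisotropic.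
-/

open IsLocalRing Polynomial Module Submodule
open scoped Pointwise

theorem exists_ringEquiv_algebraMap_eq {R F : Type*} [CommRing R] [CommRing F] [Algebra R F]
    (hinj : Function.Injective (algebraMap R F)) (σ : F ≃+* F) (hσ : ∀ x, σ (σ x) = x)
    (hR : ∀ x : R, ∃ y : R, algebraMap R F y = σ (algebraMap R F x)) :
    ∃ τ : R ≃+* R, (∀ x, τ (τ x) = x) ∧ ∀ x, algebraMap R F (τ x) = σ (algebraMap R F x) := by
  choose g hg using hR
  have hg₂ : ∀ x, g (g x) = x := fun x => hinj (by rw [hg, hg, hσ])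
  exact ⟨{ toFun := g, invFun := g, left_inv := hg₂, right_inv := hg₂
           map_mul' := fun x y => hinj (by simp only [hg, map_mul])
           map_add' := fun x y => hinj (by simp only [hg, map_add]) }, hg₂, hg⟩

section Henselian

variable {R : Type*} [CommRing R]

theorem isUnit_two_of_ringChar_residueField_ne_two [IsLocalRing R]
    (h : ringChar (ResidueField R) ≠ 2) : IsUnit (2 : R) :=
  (residue_ne_zero_iff_isUnit 2).mp (by rw [map_ofNat]; exact Ring.two_ne_zero h)

theorem exists_residue_mul_map_eq [IsLocalRing R] [Finite (ResidueField R)]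
    (hodd : ringChar (ResidueField R) ≠ 2) (τ : R ≃+* R) {ε : R} (hε : IsUnit ε)
    (hτε : τ ε = -ε) {u : R} (hτu : τ u = u) : ∃ t, residue R (t * τ t) = residue R u := by
  classical
  let K₀ : Subring (ResidueField R) := ((τ : R →+* R).eqLocus (RingHom.id R)).map (residue R)
  have hfix : ∀ {x : R}, τ x = x → residue R x ∈ K₀ := fun hx => ⟨_, hx, rfl⟩
  let _ : Fintype (ResidueField R) := Fintype.ofFinite _
  let _ : Fintype K₀ := Fintype.ofFinite _
  -- `K₀` is an additive subgroup of a finite field of odd characteristic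
  have hcard : Fintype.card K₀ % 2 = 1 := by
    have hk : Fintype.card (ResidueField R) % 2 = 1 := by
      have := (FiniteField.even_card_iff_char_two (F := ResidueField R)).not.mp hodd
      omega
    have hdvd := AddSubgroup.card_addSubgroup_dvd_card K₀.toAddSubgroup
    rw [Nat.card_eq_fintype_card, Nat.card_eq_fintype_card] at hdvd
    exact Nat.odd_iff.mp (Odd.of_dvd_nat (Nat.odd_iff.mpr hk) hdvd)
  have hτεε : τ (ε * ε) = ε * ε := by rw [map_mul, hτε, neg_mul_neg]
  set c : K₀ := ⟨residue R (ε * ε), hfix hτεε⟩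
  have hc : c ≠ 0 := fun h =>
    (residue_ne_zero_iff_isUnit _).mpr (hε.mul hε) (congrArg Subtype.val h)
  -- for `τ`-fixed `x, y`, `t = x + ε y` has `t τ t = x² - ε² y²`, so it suffices to solve
  -- `x² - ε² y² = u` among the residues `K₀` of `τ`-fixed elements
  obtain ⟨a, b, hab⟩ := FiniteField.exists_root_sum_quadratic
    (f := X ^ 2 - C ⟨residue R u, hfix hτu⟩) (g := C (-c) * X ^ 2)
    (degree_X_pow_sub_C two_pos _) (by rw [degree_C_mul_X_pow 2 (neg_ne_zero.mpr hc)]; rfl) hcard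
  obtain ⟨x, hx, hxa⟩ := Subring.mem_map.mp a.2
  obtain ⟨y, hy, hyb⟩ := Subring.mem_map.mp b.2
  refine ⟨x + ε * y, ?_⟩
  have h : (a : ResidueField R) ^ 2 - residue R u + -residue R (ε * ε) * (b : ResidueField R) ^ 2
      = 0 := by
    simpa [c] using congrArg Subtype.val hab
  have hτx : τ x = x := hx
  have hτy : τ y = y := hy
  rw [← hxa, ← hyb] at h
  rw [map_add τ, map_mul τ, hτx, hτy, hτε]
  simp only [map_mul, map_add, map_neg] at h ⊢
  linear_combination h

theorem exists_mul_self_eq_of_residue_eq [HenselianLocalRing R] (h2 : IsUnit (2 : R)) {u z : R}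
    (hz : IsUnit z) (h : residue R (z * z) = residue R u) :
    ∃ s, s * s = u ∧ residue R s = residue R z := by
  have h' : residue R (z * z - u) = 0 := by rw [map_sub, h, sub_self]
  obtain ⟨s, hs, hsz⟩ := HenselianLocalRing.is_henselian (X ^ 2 - C u)
    (monic_X_pow_sub_C u two_ne_zero) z
    ((residue_eq_zero_iff _).mp (by simpa [sq] using h'))
    (by simpa [derivative_X_pow, one_add_one_eq_two] using h2.mul hz)
  refine ⟨s, by simpa [sq, sub_eq_zero] using hs, ?_⟩
  rwa [← sub_eq_zero, ← map_sub, residue_eq_zero_iff]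

theorem exists_map_eq_self_mul_self_eq [IsDomain R] [HenselianLocalRing R] (h2 : IsUnit (2 : R))
    (τ : R ≃+* R) {u z : R} (hz : IsUnit z) (hτz : τ z = z) (hτu : τ u = u)
    (h : residue R (z * z) = residue R u) : ∃ s, τ s = s ∧ s * s = u := by
  obtain ⟨s, hs, hsz⟩ := exists_mul_self_eq_of_residue_eq h2 hz h
  refine ⟨s, ?_, hs⟩
  have hτs : (τ s - s) * (τ s + s) = 0 := by
    have := congrArg τ hs
    rw [map_mul, hτu] at this
    linear_combination this - hs
  refine sub_eq_zero.mp <| (mul_eq_zero.mp hτs).resolve_right fun hneg => ?_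
  -- `τ` preserves the maximal ideal, so `-s = τ s ≡ τ z = z ≡ s`, forcing `2 z ≡ 0`
  have hτres : ∀ x, residue R (τ x) = 0 ↔ residue R x = 0 := by
    simp [residue_eq_zero_iff, mem_maximalIdeal, mem_nonunits_iff]
  have h₁ : residue R (s - z) = 0 := by rw [map_sub, hsz, sub_self]
  have h₂ := (hτres (s - z)).mpr h₁
  rw [map_sub, hτz, eq_neg_of_add_eq_zero_left hneg] at h₂
  have h₃ : residue R (2 * z) = 0 := by
    rw [show 2 * z = -((s - z) + (-s - z)) by ring, map_neg, map_add, h₁, h₂, add_zero, neg_zero]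
  exact (residue_ne_zero_iff_isUnit _).mpr (h2.mul hz) h₃

theorem exists_mul_map_eq_of_residue_eq [IsDomain R] [HenselianLocalRing R]
    (h2 : IsUnit (2 : R)) (τ : R ≃+* R) (hτ : ∀ x, τ (τ x) = x) {u t₀ : R} (hu : IsUnit u)
    (hτu : τ u = u) (h : residue R (t₀ * τ t₀) = residue R u) : ∃ t, t * τ t = u := by
  set v := t₀ * τ t₀
  have hv : IsUnit v :=
    (residue_ne_zero_iff_isUnit _).mp (h ▸ (residue_ne_zero_iff_isUnit u).mpr hu)
  have hτv : τ v = v := by rw [map_mul, hτ, mul_comm]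
  obtain ⟨v', hvv'⟩ := hv.exists_right_inv
  have hτv' : τ v' = v' := by
    refine mul_left_cancel₀ hv.ne_zero ?_
    rw [hvv', ← hτv, ← map_mul, hvv', map_one]
  have hres : residue R (1 * 1) = residue R (u * v') := by
    rw [mul_one, map_mul (residue R) u, ← h, ← map_mul, hvv']
  obtain ⟨s, hτs, hs⟩ := exists_map_eq_self_mul_self_eq h2 τ isUnit_one (map_one τ)
    (by rw [map_mul, hτu, hτv']) hres
  refine ⟨t₀ * s, ?_⟩
  calc t₀ * s * τ (t₀ * s) = v * (s * s) := by rw [map_mul, hτs]; ring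
    _ = u := by rw [hs, mul_left_comm, hvv', mul_one]

theorem exists_mul_map_eq [IsDomain R] [HenselianLocalRing R] [Finite (ResidueField R)]
    (hodd : ringChar (ResidueField R) ≠ 2) (τ : R ≃+* R) (hτ : ∀ x, τ (τ x) = x) {ε : R}
    (hε : IsUnit ε) (hτε : τ ε = -ε) {u : R} (hu : IsUnit u) (hτu : τ u = u) :
    ∃ t, t * τ t = u :=
  let ⟨_, ht₀⟩ := exists_residue_mul_map_eq hodd τ hε hτε hτu
  exists_mul_map_eq_of_residue_eq (isUnit_two_of_ringChar_residueField_ne_two hodd) τ hτ hu hτu ht₀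

end Henselian

section HermitianForm

variable {F V : Type*} [Field F] [AddCommGroup V] [Module F V] {σ : F →+* F}
  {B : V →ₛₗ[σ] V →ₗ[F] F}

theorem linearIndependent_pair_of_span_eq_top (hdim : finrank F V = 2) {p q : V}
    (h : span F {p, q} = ⊤) : LinearIndependent F ![p, q] :=
  linearIndependent_of_top_le_span_of_card_eq_finrank
    (by simpa [Matrix.range_cons, Set.pair_comm] using h.ge)
    (by simp [hdim])

def gramDet (B : V →ₛₗ[σ] V →ₗ[F] F) (x₁ x₂ y₁ y₂ : V) : F :=
  B x₁ y₁ * B x₂ y₂ - B x₁ y₂ * B x₂ y₁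

namespace LinearMap.IsSymm

theorem map_gramDet (hB : B.IsSymm) (p q : V) : σ (gramDet B p q p q) = gramDet B p q p q := by
  simp only [gramDet, map_sub, map_mul, hB.eq]
  ring

/-- Completing the square in the hermitian form `B`. -/
theorem mul_apply_smul_add_smul (hB : B.IsSymm) (p q : V) (x y : F) :
    B p p * B (x • p + y • q) (x • p + y • q) =
      σ (B p p * x + B p q * y) * (B p p * x + B p q * y) + σ y * y * gramDet B p q p q := by
  have hpp : σ (B p p) = B p p := hB.eq p p
  have hqp : B q p = σ (B p q) := (hB.eq p q).symm
  simp only [gramDet, map_add, map_smulₛₗ, LinearMap.add_apply, LinearMap.smul_apply,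
    smul_eq_mul, map_mul, hpp, hqp, RingHom.id_apply]
  ring

theorem exists_neg_gramDet_eq_of_isotropic (hB : B.IsSymm) {p q : V}
    (hspan : span F {p, q} = ⊤) {v : V} (hv : v ≠ 0) (hvv : B v v = 0) :
    ∃ s, -gramDet B p q p q = σ s * s := by
  by_cases hp : B p p = 0
  · exact ⟨B p q, by rw [gramDet, hp, ← hB.eq p q]; ring⟩
  obtain ⟨x, y, rfl⟩ := mem_span_pair.mp (hspan ▸ mem_top : v ∈ span F {p, q})
  have hy : y ≠ 0 := by
    rintro rfl
    have : σ x * x * B p p = 0 := by simpa [map_smulₛₗ, mul_assoc] using hvv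
    simp_all
  have key := hB.mul_apply_smul_add_smul p q x y
  rw [hvv, mul_zero] at key
  refine ⟨(B p p * x + B p q * y) / y, ?_⟩
  have hσy : σ y ≠ 0 := (map_ne_zero σ).mpr hy
  rw [map_div₀]
  field_simp
  linear_combination key

theorem exists_isotropic_of_neg_gramDet_eq (hB : B.IsSymm) {p q : V}
    (hli : LinearIndependent F ![p, q]) {s : F} (hs : -gramDet B p q p q = σ s * s) :
    ∃ v ≠ 0, B v v = 0 := by
  by_cases hp : B p p = 0
  · exact ⟨p, hli.ne_zero 0, hp⟩
  set x := (s - B p q) / B p p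
  refine ⟨x • p + (1 : F) • q, fun h => ?_, ?_⟩
  · exact one_ne_zero (LinearIndependent.pair_iff.mp hli x 1 h).2
  · have key := hB.mul_apply_smul_add_smul p q x 1
    rw [show B p p * x + B p q * 1 = s by simp only [x, mul_one]; field_simp; ring, map_one,
      one_mul, one_mul] at key
    exact (mul_eq_zero.mp (key.trans (by linear_combination -hs))).resolve_left hp

theorem exists_apply_eq_one_apply_eq_zero (hB : B.IsSymm) (hnd : B.SeparatingLeft)
    (hdim : finrank F V = 2) {p q : V} (hspan : span F {p, q} = ⊤) :
    ∃ D, B D p = 1 ∧ B D q = 0 := by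
  have : FiniteDimensional F V := Module.finite_of_finrank_eq_succ hdim
  let Φ : V →ₗ[F] Fin 2 → F := LinearMap.pi ![B p, B q]
  have hΦ : Function.Injective Φ := by
    refine (injective_iff_map_eq_zero Φ).mpr fun y hy => hnd y fun x => ?_
    have hpy : B p y = 0 := congrFun hy 0
    have hqy : B q y = 0 := congrFun hy 1
    obtain ⟨a, b, rfl⟩ := mem_span_pair.mp (hspan ▸ mem_top : x ∈ span F {p, q})
    rw [← hB.eq]
    simp [hpy, hqy]
  obtain ⟨D, hD⟩ := (LinearMap.injective_iff_surjective_of_finrank_eq_finrank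
    (by simp [hdim])).mp hΦ ![1, 0]
  refine ⟨D, ?_, ?_⟩
  · rw [← hB.eq, show B p D = 1 from congrFun hD 0, map_one]
  · rw [← hB.eq, show B q D = 0 from congrFun hD 1, map_zero]

end LinearMap.IsSymm

end HermitianForm

section Lattice

variable {R F V : Type*} [CommRing R] [Field F] [Algebra R F] [AddCommGroup V] [Module F V]
  [Module R V] [IsScalarTower R F V]

theorem Submodule.IsLattice.span_pair_eq_top {L : Submodule R V} [L.IsLattice F] {p q : V}
    (hL : span R {p, q} = L) : span F {p, q} = ⊤ := by
  rw [← span_span_of_tower R, hL, IsLattice.span_eq_top]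

theorem Submodule.IsLattice.exists_span_pair_eq [IsDomain R] [IsPrincipalIdealRing R]
    [IsFractionRing R F] (hdim : finrank F V = 2) (L : Submodule R V) [L.IsLattice F] :
    ∃ p q : V, span R {p, q} = L := by
  have : FiniteDimensional F V := Module.finite_of_finrank_eq_succ hdim
  have hrank : finrank R L = 2 := by
    rw [← hdim]
    exact finrank_eq_of_rank_eq ((IsLattice.rank' F L).trans (finrank_eq_rank F V).symm)
  let b := finBasisOfFinrankEq R L hrank
  refine ⟨b 0, b 1, le_antisymm (span_le.mpr (by simp [Set.insert_subset_iff])) fun x hx => ?_⟩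
  have hsum := b.sum_repr ⟨x, hx⟩
  rw [Fin.sum_univ_two] at hsum
  exact mem_span_pair.mpr ⟨b.repr ⟨x, hx⟩ 0, b.repr ⟨x, hx⟩ 1, by
    simpa using congrArg Subtype.val hsum⟩

variable {σ : F →+* F} {B : V →ₛₗ[σ] V →ₗ[F] F}

variable (R) in
def dualLattice (B : V →ₛₗ[σ] V →ₗ[F] F) (L : Submodule R V) : Set V :=
  {v | ∀ w ∈ L, ∃ r : R, B v w = algebraMap R F r}

theorem apply_smul_add_smul_left (τ : R →+* R)
    (hτ : ∀ r, algebraMap R F (τ r) = σ (algebraMap R F r)) (a b : R) (x y z : V) :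
    B (a • x + b • y) z = algebraMap R F (τ a) * B x z + algebraMap R F (τ b) * B y z := by
  rw [← algebraMap_smul F a x, ← algebraMap_smul F b y, map_add, LinearMap.add_apply,
    LinearMap.map_smulₛₗ₂, LinearMap.map_smulₛₗ₂, hτ, hτ, smul_eq_mul, smul_eq_mul]

theorem mem_dualLattice_of_apply_eq {L : Submodule R V} {p q : V} (hL : span R {p, q} = L)
    {D : V} {a b : R} (hp : B D p = algebraMap R F a) (hq : B D q = algebraMap R F b) :
    D ∈ dualLattice R B L := by
  intro w hw
  obtain ⟨r, s, rfl⟩ := mem_span_pair.mp (hL ▸ hw)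
  refine ⟨r * a + s * b, ?_⟩
  rw [map_add, LinearMap.map_smul_of_tower, LinearMap.map_smul_of_tower, hp, hq,
    Algebra.smul_def, Algebra.smul_def, map_add, map_mul, map_mul]

namespace LinearMap.IsSymm

theorem exists_mem_dualLattice_apply_eq_one_apply_eq_zero (hB : B.IsSymm)
    (hnd : B.SeparatingLeft) (hdim : finrank F V = 2)
    {L : Submodule R V} {p q : V} (hL : span R {p, q} = L) (hspan : span F {p, q} = ⊤) :
    ∃ D ∈ dualLattice R B L, B D p = 1 ∧ B D q = 0 := by
  obtain ⟨D, hp, hq⟩ := hB.exists_apply_eq_one_apply_eq_zero hnd hdim hspan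
  exact ⟨D, mem_dualLattice_of_apply_eq hL (a := 1) (b := 0) (by simpa) (by simpa), hp, hq⟩

theorem exists_isUnit_gramDet_of_coe_eq_dualLattice (hB : B.IsSymm) (hnd : B.SeparatingLeft)
    (hinj : Function.Injective (algebraMap R F)) (τ : R →+* R)
    (hτ : ∀ r, algebraMap R F (τ r) = σ (algebraMap R F r)) (hdim : finrank F V = 2)
    {L M : Submodule R V} (hM : (M : Set V) = dualLattice R B L) {p q p' q' : V}
    (hL : span R {p, q} = L) (hspan : span F {p, q} = ⊤) (hM' : span R {p', q'} = M) :
    ∃ δ : R, IsUnit δ ∧ gramDet B p' q' p q = algebraMap R F δ := by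
  have hint : ∀ x ∈ M, ∀ y ∈ L, ∃ r : R, B x y = algebraMap R F r := fun x hx =>
    (hM ▸ hx : x ∈ dualLattice R B L)
  have hpL : p ∈ L := hL ▸ subset_span (by simp)
  have hqL : q ∈ L := hL ▸ subset_span (by simp)
  have hp'M : p' ∈ M := hM' ▸ subset_span (by simp)
  have hq'M : q' ∈ M := hM' ▸ subset_span (by simp)
  obtain ⟨h₁₁, e₁₁⟩ := hint p' hp'M p hpL
  obtain ⟨h₁₂, e₁₂⟩ := hint p' hp'M q hqL
  obtain ⟨h₂₁, e₂₁⟩ := hint q' hq'M p hpL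
  obtain ⟨h₂₂, e₂₂⟩ := hint q' hq'M q hqL
  -- the dual basis `(D₁, D₂)` of `(p, q)` lies in `M`, so it has `R`-coordinates `k` in
  -- `(p', q')`, and `τ k` is an inverse of the pairing matrix `h`
  obtain ⟨D₁, hD₁, hD₁p, -⟩ :=
    hB.exists_mem_dualLattice_apply_eq_one_apply_eq_zero hnd hdim hL hspan
  obtain ⟨D₂, hD₂, hD₂q, hD₂p⟩ := hB.exists_mem_dualLattice_apply_eq_one_apply_eq_zero hnd hdim
    ((Set.pair_comm q p).symm ▸ hL) ((Set.pair_comm q p).symm ▸ hspan)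
  obtain ⟨k₁₁, k₁₂, rfl⟩ := mem_span_pair.mp (hM' ▸ (hM ▸ hD₁ : D₁ ∈ (M : Set V)))
  obtain ⟨k₂₁, k₂₂, rfl⟩ := mem_span_pair.mp (hM' ▸ (hM ▸ hD₂ : D₂ ∈ (M : Set V)))
  rw [apply_smul_add_smul_left τ hτ, e₁₁, e₂₁, ← map_mul, ← map_mul, ← map_add] at hD₁p hD₂p
  rw [apply_smul_add_smul_left τ hτ, e₁₂, e₂₂, ← map_mul, ← map_mul, ← map_add] at hD₂q
  have E₁₁ := hinj (hD₁p.trans (map_one _).symm)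
  have E₂₁ := hinj (hD₂p.trans (map_zero _).symm)
  have E₂₂ := hinj (hD₂q.trans (map_one _).symm)
  refine ⟨h₁₁ * h₂₂ - h₁₂ * h₂₁, IsUnit.of_mul_eq_one (τ k₁₁ * τ k₂₂ - τ k₁₂ * τ k₂₁) ?_, ?_⟩
  · linear_combination (τ k₂₁ * h₁₂ + τ k₂₂ * h₂₂) * E₁₁ + E₂₂ - (τ k₁₁ * h₁₂ + τ k₁₂ * h₂₂) * E₂₁
  · simp [gramDet, e₁₁, e₁₂, e₂₁, e₂₂]

end LinearMap.IsSymm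

end Lattice

theorem span_pair_smul_add_smul_eq {R M : Type*} [CommRing R] [AddCommGroup M] [Module R M]
    {r : R} (hr : IsUnit r) (s : R) (p q : M) : span R {r • p + s • q, q} = span R {p, q} := by
  refine le_antisymm (span_le.mpr ?_) (span_le.mpr ?_) <;>
    simp only [Set.insert_subset_iff, Set.singleton_subset_iff, SetLike.mem_coe]
  · exact ⟨add_mem (smul_mem _ _ (subset_span (by simp))) (smul_mem _ _ (subset_span (by simp))),
      subset_span (by simp)⟩
  · refine ⟨mem_span_pair.mpr ⟨↑hr.unit⁻¹, -(↑hr.unit⁻¹ * s), ?_⟩, subset_span (by simp)⟩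
    rw [smul_add, smul_smul, smul_smul, hr.val_inv_mul, one_smul, neg_smul, add_neg_cancel_right]

section DVR

variable {R : Type*} [CommRing R] [IsDomain R] [IsDiscreteValuationRing R] {ϖ : R}

theorem Irreducible.dvd_of_not_isUnit (hϖ : Irreducible ϖ) {r : R} (hr : ¬IsUnit r) : ϖ ∣ r :=
  Ideal.mem_span_singleton.mp <|
    (IsDiscreteValuationRing.irreducible_iff_uniformizer ϖ).mp hϖ ▸
      (IsLocalRing.mem_maximalIdeal r).mpr hr

variable {M : Type*} [AddCommGroup M] [Module R M] {L L' : Submodule R M}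

theorem span_pair_smul_eq_of_lt (hϖ : Irreducible ϖ) {p q : M} (hL : span R {p, q} = L)
    (hp : p ∈ L') (hϖL : ϖ • L ≤ L') (hlt : L' < L) : span R {p, ϖ • q} = L' := by
  refine le_antisymm (span_le.mpr ?_) fun z hz => ?_
  · simp only [Set.insert_subset_iff, Set.singleton_subset_iff, SetLike.mem_coe]
    exact ⟨hp, hϖL (smul_mem_pointwise_smul _ _ _ (hL ▸ subset_span (by simp)))⟩
  obtain ⟨a, b, rfl⟩ := mem_span_pair.mp (hL ▸ hlt.le hz)
  by_cases hb : IsUnit b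
  · -- a unit `b` would give `q ∈ L'`, hence `L ≤ L'`
    refine absurd (hL ▸ span_le.mpr ?_) hlt.not_ge
    simp only [Set.insert_subset_iff, Set.singleton_subset_iff, SetLike.mem_coe]
    refine ⟨hp, ?_⟩
    have : q = (↑hb.unit⁻¹ : R) • (a • p + b • q - a • p) := by
      rw [add_sub_cancel_left, smul_smul, hb.val_inv_mul, one_smul]
    exact this ▸ smul_mem _ _ (sub_mem hz (smul_mem _ _ hp))
  · obtain ⟨c, rfl⟩ := hϖ.dvd_of_not_isUnit hb
    exact mem_span_pair.mpr ⟨a, c, by rw [smul_smul, mul_comm]⟩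

theorem exists_span_pair_eq_and_span_pair_smul_eq (hϖ : Irreducible ϖ) {g₁ g₂ : M}
    (hL : span R {g₁, g₂} = L) (hϖL : ϖ • L < L') (hlt : L' < L) :
    ∃ p q, span R {p, q} = L ∧ span R {p, ϖ • q} = L' := by
  obtain ⟨x, hxL', hx⟩ := SetLike.exists_of_lt hϖL
  obtain ⟨r₁, r₂, rfl⟩ := mem_span_pair.mp (hL ▸ hlt.le hxL')
  have key : ∀ {p q : M} {r s : R}, IsUnit r → span R {p, q} = L → r • p + s • q ∈ L' →
      ∃ p q, span R {p, q} = L ∧ span R {p, ϖ • q} = L' := fun hr hpq hx =>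
    have h := (span_pair_smul_add_smul_eq hr _ _ _).trans hpq
    ⟨_, _, h, span_pair_smul_eq_of_lt hϖ h hx hϖL.le hlt⟩
  by_cases hr₁ : IsUnit r₁
  · exact key hr₁ hL hxL'
  by_cases hr₂ : IsUnit r₂
  · exact key hr₂ ((Set.pair_comm _ _).symm ▸ hL) (add_comm (r₁ • g₁) _ ▸ hxL')
  -- both coefficients divisible by `ϖ` would put `x` in `ϖ • L`
  obtain ⟨a, rfl⟩ := hϖ.dvd_of_not_isUnit hr₁
  obtain ⟨b, rfl⟩ := hϖ.dvd_of_not_isUnit hr₂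
  refine absurd ?_ hx
  rw [mul_smul, mul_smul, ← smul_add]
  exact smul_mem_pointwise_smul _ _ _ (hL ▸ mem_span_pair.mpr ⟨a, b, rfl⟩)

theorem exists_isUnit_map_eq_neg (hϖ : Irreducible ϖ) (τ : R ≃+* R) (hτ : ∀ x, τ (τ x) = x)
    (hτϖ : τ ϖ = ϖ) (hne : τ ≠ RingEquiv.refl R) : ∃ ε, IsUnit ε ∧ τ ε = -ε := by
  obtain ⟨x, hx⟩ : ∃ x, τ x ≠ x := by
    by_contra! h
    exact hne (RingEquiv.ext h)
  -- `x - τ x` is anti-invariant, and so is its unit part since `τ ϖ = ϖ`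
  obtain ⟨n, u, hu⟩ :=
    IsDiscreteValuationRing.eq_unit_mul_pow_irreducible (sub_ne_zero.mpr hx.symm) hϖ
  refine ⟨u, u.isUnit, mul_right_cancel₀ (pow_ne_zero n hϖ.ne_zero) ?_⟩
  have h : τ (x - τ x) = -(x - τ x) := by rw [map_sub, hτ]; ring
  rw [hu, map_mul, map_pow, hτϖ] at h
  linear_combination h

theorem exists_map_mul_self_eq_unit_mul_pow (hϖ : Irreducible ϖ) (τ : R ≃+* R) (hτϖ : τ ϖ = ϖ)
    {a : R} (ha : a ≠ 0) : ∃ (u : Rˣ) (n : ℕ), τ a * a = u * ϖ ^ (2 * n) := by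
  obtain ⟨n, u, rfl⟩ := IsDiscreteValuationRing.eq_unit_mul_pow_irreducible ha hϖ
  refine ⟨Units.map τ u * u, n, ?_⟩
  simp only [map_mul, map_pow, hτϖ, Units.val_mul, Units.coe_map, MonoidHom.coe_coe]
  ring

/-- Norms from the unramified quadratic extension have even valuation. -/
theorem algebraMap_mul_map_mul_self_ne {F : Type*} [Field F] [Algebra R F] [IsFractionRing R F]
    {σ : F →+* F} (τ : R ≃+* R) (hτ : ∀ r, algebraMap R F (τ r) = σ (algebraMap R F r))
    (hϖ : Irreducible ϖ) (hτϖ : τ ϖ = ϖ) (s : F) {δ : R} (hδ : IsUnit δ) :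
    algebraMap R F ϖ * (σ s * s) ≠ algebraMap R F δ := by
  intro h
  have hinj := IsFractionRing.injective R F
  obtain ⟨a, b, hb, rfl⟩ := IsFractionRing.div_surjective (A := R) s
  have hb₀ : b ≠ 0 := nonZeroDivisors.ne_zero hb
  have hb' : algebraMap R F b ≠ 0 := (map_ne_zero_iff _ hinj).mpr hb₀
  have hτb' : algebraMap R F (τ b) ≠ 0 :=
    (map_ne_zero_iff _ hinj).mpr ((map_ne_zero_iff τ τ.injective).mpr hb₀)
  rw [map_div₀, ← hτ, ← hτ] at h
  field_simp at h
  have hR : ϖ * (τ a * a) = δ * (τ b * b) := hinj (by simp only [map_mul]; linear_combination h)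
  have ha : a ≠ 0 := by
    rintro rfl
    simp [hδ.ne_zero, hb₀] at hR
  obtain ⟨u, m, hu⟩ := exists_map_mul_self_eq_unit_mul_pow hϖ τ hτϖ ha
  obtain ⟨v, n, hv⟩ := exists_map_mul_self_eq_unit_mul_pow hϖ τ hτϖ hb₀
  have := IsDiscreteValuationRing.unit_mul_pow_congr_pow hϖ hϖ u (hδ.unit * v) (2 * m + 1)
    (2 * n) (by rw [pow_succ, Units.val_mul, IsUnit.unit_spec, mul_assoc, ← hv, ← hR, hu]; ring)
  omega

end DVR

section Isotropy

variable {R F V : Type*} [CommRing R] [IsDomain R] [Field F] [Algebra R F] [IsFractionRing R F]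
  [AddCommGroup V] [Module F V] [Module R V] [IsScalarTower R F V] {σ : F →+* F}
  {B : V →ₛₗ[σ] V →ₗ[F] F}

namespace LinearMap.IsSymm

theorem exists_isotropic_of_coe_eq_dualLattice [IsPrincipalIdealRing R] [HenselianLocalRing R]
    [Finite (ResidueField R)] (hB : B.IsSymm) (hnd : B.SeparatingLeft) (hdim : finrank F V = 2)
    (hodd : ringChar (ResidueField R) ≠ 2) (τ : R ≃+* R) (hτ₂ : ∀ x, τ (τ x) = x)
    (hτ : ∀ r, algebraMap R F (τ r) = σ (algebraMap R F r)) {ε : R} (hε : IsUnit ε)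
    (hτε : τ ε = -ε) (L : Submodule R V) [L.IsLattice F] (hL : (L : Set V) = dualLattice R B L) :
    ∃ v ≠ 0, B v v = 0 := by
  have hinj := IsFractionRing.injective R F
  obtain ⟨p, q, hpq⟩ := IsLattice.exists_span_pair_eq hdim L
  have hspan := IsLattice.span_pair_eq_top hpq
  obtain ⟨δ, hδ, hΔ⟩ :=
    hB.exists_isUnit_gramDet_of_coe_eq_dualLattice hnd hinj τ hτ hdim hL hpq hspan hpq
  have hτδ : τ δ = δ := hinj ((hτ δ).trans (hΔ ▸ hB.map_gramDet p q))
  obtain ⟨t, ht⟩ := exists_mul_map_eq hodd τ hτ₂ hε hτε hδ.neg (by rw [map_neg, hτδ])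
  exact hB.exists_isotropic_of_neg_gramDet_eq (linearIndependent_pair_of_span_eq_top hdim hspan)
    (s := algebraMap R F t) (by rw [hΔ, ← hτ, ← map_mul, mul_comm, ht, map_neg])

theorem eq_zero_of_apply_self_eq_zero [IsDiscreteValuationRing R] (hB : B.IsSymm)
    (hnd : B.SeparatingLeft) (hdim : finrank F V = 2) (τ : R ≃+* R)
    (hτ : ∀ r, algebraMap R F (τ r) = σ (algebraMap R F r)) {ϖ : R} (hϖ : Irreducible ϖ)
    (hτϖ : τ ϖ = ϖ) {L M : Submodule R V} [L.IsLattice F] (hM : (M : Set V) = dualLattice R B L)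
    (hϖL : ϖ • L < M) (hML : M < L) {v : V} (hvv : B v v = 0) : v = 0 := by
  by_contra hv
  obtain ⟨g₁, g₂, hg⟩ := IsLattice.exists_span_pair_eq hdim L
  obtain ⟨p, q, hpq, hM'⟩ := exists_span_pair_eq_and_span_pair_smul_eq hϖ hg hϖL hML
  have hspan := IsLattice.span_pair_eq_top hpq
  obtain ⟨δ, hδ, hΔ⟩ := hB.exists_isUnit_gramDet_of_coe_eq_dualLattice hnd
    (IsFractionRing.injective R F) τ hτ hdim hM hpq hspan hM'
  obtain ⟨s, hs⟩ := hB.exists_neg_gramDet_eq_of_isotropic hspan hv hvv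
  have hϖΔ : gramDet B p (ϖ • q) p q = algebraMap R F ϖ * gramDet B p q p q := by
    simp only [gramDet, ← algebraMap_smul F ϖ q, LinearMap.map_smulₛₗ₂, ← hτ, hτϖ, smul_eq_mul]
    ring
  exact algebraMap_mul_map_mul_self_ne τ hτ hϖ hτϖ s hδ.neg
    (by rw [← hs, map_neg, ← hΔ, hϖΔ]; ring)

end LinearMap.IsSymm

end Isotropy

/-- Let `(V, f)` be a 2-dimensional nondegenerate hermitian space over
the unramified quadratic extension `F/F₀` of non-archimedean local fields (odd
residual characteristic), and `Λ` a strict self-dual `𝔬_F`-lattice sequence in `V`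
with `e(Λ) = 2` and `Λ(i)^# = Λ(d-i)`.  Then `(V,f)` is anisotropic iff `d` is odd.
Here `𝔬_F` is modelled by a complete (Henselian) discrete valuation ring `R` with
finite residue field of odd characteristic and fraction field `F`, the Galois
conjugation `σ` fixes a uniformizer `ϖ` (unramifiedness). -/
theorem stmt_11
    (R : Type) [CommRing R] [IsDomain R] [IsDiscreteValuationRing R]
    [HenselianLocalRing R] [Finite (IsLocalRing.ResidueField R)]
    (hodd : ringChar (IsLocalRing.ResidueField R) ≠ 2)
    (F : Type) [Field F] [Algebra R F] [IsFractionRing R F]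
    (σ : F ≃+* F) (hσ2 : ∀ x, σ (σ x) = x) (hσne : σ ≠ RingEquiv.refl F)
    (hRσ : ∀ x : R, ∃ y : R, algebraMap R F y = σ (algebraMap R F x))
    (ϖ : R) (hϖ : Irreducible ϖ) (hϖσ : σ (algebraMap R F ϖ) = algebraMap R F ϖ)
    (V : Type) [AddCommGroup V] [Module F V] [Module R V] [IsScalarTower R F V]
    (hdim : Module.finrank F V = 2)
    (f : V → V → F)
    (hadd₁ : ∀ v v' w, f (v + v') w = f v w + f v' w)
    (hadd₂ : ∀ v w w', f v (w + w') = f v w + f v w')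
    (hsmul₁ : ∀ (a : F) v w, f (a • v) w = σ a * f v w)
    (hsmul₂ : ∀ (a : F) v w, f v (a • w) = a * f v w)
    (hherm : ∀ v w, f w v = σ (f v w))
    (hnd : ∀ v, (∀ w, f v w = 0) → v = 0)
    (Λ : ℤ → Submodule R V)
    (hlat : ∀ i, (Λ i).FG ∧ Submodule.span F ((Λ i : Set V)) = ⊤)
    (hstrict : ∀ i, Λ (i + 1) < Λ i)
    (hper : ∀ i, ((Λ (i + 2) : Set V)) = (fun v => algebraMap R F ϖ • v) '' (Λ i : Set V))
    (d : ℤ)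
    (hdual : ∀ i, ((Λ (d - i) : Set V)) =
      {v : V | ∀ w ∈ Λ i, ∃ r : R, f v w = algebraMap R F r}) :
    (∀ v : V, f v v = 0 → v = 0) ↔ Odd d := by
  have hinj := IsFractionRing.injective R F
  obtain ⟨τ, hτ₂, hτ⟩ := exists_ringEquiv_algebraMap_eq hinj σ hσ2 hRσ
  have hτϖ : τ ϖ = ϖ := hinj (by rw [hτ, hϖσ])
  have hτne : τ ≠ RingEquiv.refl R := by
    rintro rfl
    refine hσne (RingEquiv.toRingHom_injective (IsLocalization.ringHom_ext (nonZeroDivisors R)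
      (RingHom.ext fun x => ?_)))
    simpa using (hτ x).symm
  have : ∀ i, (Λ i).IsLattice F := fun i => ⟨(hlat i).1, (hlat i).2⟩
  let B : V →ₛₗ[(σ : F →+* F)] V →ₗ[F] F := LinearMap.mk₂'ₛₗ _ _ f hadd₁ hsmul₁ hadd₂ hsmul₂
  have hB : B.IsSymm := ⟨fun x y => (hherm x y).symm⟩
  have hdual' : ∀ i, (Λ (d - i) : Set V) = dualLattice R B (Λ i) := hdual
  constructor
  · intro haniso
    by_contra hd
    obtain ⟨m, rfl⟩ : Even d := Int.not_odd_iff_even.mp hd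
    obtain ⟨ε, hε, hτε⟩ := exists_isUnit_map_eq_neg hϖ τ hτ₂ hτϖ hτne
    obtain ⟨v, hv, hvv⟩ := hB.exists_isotropic_of_coe_eq_dualLattice hnd hdim hodd τ hτ₂ hτ hε
      hτε (Λ m) (by simpa using hdual' m)
    exact hv (haniso v hvv)
  · rintro ⟨m, rfl⟩ v hvv
    have hϖΛ : ϖ • Λ m = Λ (m + 1 + 1) := SetLike.coe_injective <| by
      rw [Submodule.coe_pointwise_smul, show m + 1 + 1 = m + 2 by ring, hper, ← Set.image_smul]
      simp only [algebraMap_smul]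
    exact hB.eq_zero_of_apply_self_eq_zero hnd hdim τ hτ hϖ hτϖ
      (by simpa [two_mul, add_assoc] using hdual' m) (hϖΛ ▸ hstrict (m + 1)) (hstrict m) hvv
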